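/- For an integer n ≥ 2 and integers k_1, …, k_n ≥ 3, the critical group K(H_{k_1−1,…,k_n−1}) of the hinge graph H_{k_1−1,…,k_n−1} is a finite group of cardinality ∏_{i=1}^n (k_i−1) + ∑_{i=1}^n ∏_{j≠i} (k_j−1). -/

import Mathlib

/-- Vertex set of the hinge graph `H_{k₁-1,…,kₙ-1}` with base cycles of lengths `k i`:
two shared vertices `u, w` (encoded as `Sum.inl 0`, `Sum.inl 1`) together with the vertices
`v_{i,j}` (encoded as `Sum.inr ⟨i, j⟩`, zero-indexed, `j < k i - 2`). -/
abbrev GHingeVertex (n : ℕ) (k : Fin n → ℕ) : Type := Fin 2 ⊕ (Σ i : Fin n, Fin (k i - 2))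

/-- The shared vertex `u`. -/
def gu (n : ℕ) (k : Fin n → ℕ) : GHingeVertex n k := Sum.inl 0

/-- The shared vertex `w`. -/
def gw (n : ℕ) (k : Fin n → ℕ) : GHingeVertex n k := Sum.inl 1

/-- The vertex `v_{i+1,j+1}` of the `i+1`-st cycle (zero-indexed here). -/
def gv (n : ℕ) (k : Fin n → ℕ) (i : Fin n) (j : Fin (k i - 2)) : GHingeVertex n k :=
  Sum.inr ⟨i, j⟩

/-- The base (Boolean) edge relation of the hinge graph: `u-w`, `u-v_{i,1}`,
`v_{i,j}-v_{i,j+1}`, `v_{i,k_i-2}-w`. -/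
def gHingeRelB (n : ℕ) (k : Fin n → ℕ) : GHingeVertex n k → GHingeVertex n k → Bool
  | Sum.inl a, Sum.inl b => a != b
  | Sum.inl a, Sum.inr p => a == 0 && p.2.val == 0
  | Sum.inr p, Sum.inl b => b == 1 && p.2.val == k p.1 - 3
  | Sum.inr p, Sum.inr q => p.1 == q.1 && q.2.val == p.2.val + 1

/-- The hinge graph `H_{k₁-1,…,kₙ-1}`: cycles of lengths `k 1, …, k n` glued along the
common edge `{u, w}`. -/
def GHinge (n : ℕ) (k : Fin n → ℕ) : SimpleGraph (GHingeVertex n k) :=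
  SimpleGraph.fromRel (fun x y => gHingeRelB n k x y = true)

instance (n : ℕ) (k : Fin n → ℕ) : DecidableRel (GHinge n k).Adj := fun x y =>
  inferInstanceAs (Decidable (x ≠ y ∧ (gHingeRelB n k x y = true ∨ gHingeRelB n k y x = true)))

/-- The number of spanning trees of a graph `G`: the number of edge sets `s ⊆ E(G)`
whose associated spanning subgraph (on all of `V`) is connected and acyclic. -/
noncomputable def spanningTreeCount {V : Type*} (G : SimpleGraph V) : ℕ :=
  Set.ncard {s : Set (Sym2 V) | s ⊆ G.edgeSet ∧ (SimpleGraph.fromEdgeSet s).IsTree}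

/-- The degree homomorphism on divisors. -/
def degHom (V : Type*) [Fintype V] : (V → ℤ) →+ ℤ where
  toFun D := ∑ v, D v
  map_zero' := by simp
  map_add' x y := by simp [Finset.sum_add_distrib]

/-- The group `Div⁰` of degree-zero divisors. -/
def Div0 (V : Type*) [Fintype V] : AddSubgroup (V → ℤ) := (degHom V).ker

/-- The group of principal divisors: the image of the Laplacian `L = Deg - A`. -/
def Prin {V : Type*} [Fintype V] [DecidableEq V] (G : SimpleGraph V) [DecidableRel G.Adj] :
    AddSubgroup (V → ℤ) :=
  AddMonoidHom.range (Matrix.mulVecLin (G.lapMatrix ℤ)).toAddMonoidHom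

/-- The critical group `K(G) = Div⁰(G) / Prin(G)`. -/
def CriticalGroup {V : Type*} [Fintype V] [DecidableEq V] (G : SimpleGraph V)
    [DecidableRel G.Adj] : Type _ :=
  Div0 V ⧸ ((Prin G).addSubgroupOf (Div0 V))

noncomputable instance {V : Type*} [Fintype V] [DecidableEq V] (G : SimpleGraph V)
    [DecidableRel G.Adj] : AddCommGroup (CriticalGroup G) :=
  inferInstanceAs (AddCommGroup (Div0 V ⧸ ((Prin G).addSubgroupOf (Div0 V))))

/-- The class of a degree-zero divisor in the critical group. -/
def divisorClass {V : Type*} [Fintype V] [DecidableEq V] (G : SimpleGraph V)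
    [DecidableRel G.Adj] (D : V → ℤ) (hD : D ∈ Div0 V) : CriticalGroup G :=
  (QuotientAddGroup.mk (⟨D, hD⟩ : Div0 V) :
    Div0 V ⧸ ((Prin G).addSubgroupOf (Div0 V)))

/-- The divisor with value `1` at `x`, `-1` at `y` (for `x ≠ y`) and `0` elsewhere. -/
def pointDiff {V : Type*} [DecidableEq V] (x y : V) : V → ℤ :=
  fun z => (if z = x then 1 else 0) - (if z = y then 1 else 0)

lemma pointDiff_mem {V : Type*} [Fintype V] [DecidableEq V] (x y : V) :
    pointDiff x y ∈ Div0 V := by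
  simp [Div0, AddMonoidHom.mem_ker, degHom, pointDiff, Finset.sum_sub_distrib]

/-!
Restricting divisors to `V ∖ {w}` identifies `K(G)` with `ℤ^{V ∖ {w}}` modulo the image of the
reduced Laplacian `Q`, so `|K(G)| = |det Q|`. Listing the inner vertices of the paths first and `u`
last, `Q` is the block-diagonal matrix of the path matrices `Tₘ` (`2` on the diagonal, `-1` beside
it, `m = kᵢ - 2`) bordered by the row and column of `u`. A bordered determinant is computed by the
column operation that scales the last column by `s` and adds a combination `h` of the other columns
clearing its upper block; `h` is then harmonic along the paths, hence linear on each of them. This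
gives `det Tₘ = m + 1` by induction on `m`, and with `s = ∏ (mᵢ + 1)`,
`det Q = (n + 1) s - ∑ mᵢ ∏_{j ≠ i} (mⱼ + 1) = ∏ (mᵢ + 1) + ∑ ∏_{j ≠ i} (mⱼ + 1)`.
-/

open Matrix

namespace Matrix

variable {R : Type*} [CommRing R]

theorem det_blockDiagonal' {o : Type*} [Fintype o] [DecidableEq o] [LinearOrder o]
    {m : o → Type*} [∀ i, Fintype (m i)] [∀ i, DecidableEq (m i)]
    (M : ∀ i, Matrix (m i) (m i) R) : (blockDiagonal' M).det = ∏ i, (M i).det := by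
  rw [(blockTriangular_blockDiagonal' M).det_fintype]
  refine Fintype.prod_congr _ _ fun i => ?_
  rw [← det_reindex_self (Equiv.sigmaSubtype i)]
  congr 1
  ext a b
  simp [toSquareBlock_def, Equiv.sigmaSubtype]

theorem blockDiagonal'_mulVec_apply {o : Type*} [DecidableEq o] [Fintype o] {m : o → Type*}
    [∀ i, Fintype (m i)] (M : ∀ i, Matrix (m i) (m i) R) (v : (Σ i, m i) → R) (i : o) (j : m i) :
    (blockDiagonal' M *ᵥ v) ⟨i, j⟩ = (M i *ᵥ fun j' => v ⟨i, j'⟩) j := by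
  simp only [mulVec, dotProduct, Fintype.sum_sigma]
  rw [Finset.sum_eq_single i]
  · simp
  · intro i' _ hi'
    simp [blockDiagonal'_apply_ne M _ _ (Ne.symm hi')]
  · simp

theorem det_fromBlocks_unique_mul {m n : Type*} [Fintype m] [DecidableEq m] [Unique n]
    [DecidableEq n] {A : Matrix m m R} {b c : m → R} {d : R} (h : m → R) (s : R)
    (hh : A *ᵥ h + s • b = 0) :
    (fromBlocks A (of fun i (_ : n) => b i) (of fun _ j => c j) (of fun _ _ => d)).det * s
      = A.det * (c ⬝ᵥ h + d * s) := by
  have hX : (fromBlocks 1 (of fun i (_ : n) => h i) 0 (of fun _ _ => s)).det = s := by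
    rw [det_fromBlocks_zero₂₁, det_one, one_mul, det_unique, of_apply]
  have hB : A * of (fun i (_ : n) => h i) + of (fun i (_ : n) => b i) * of (fun (_ _ : n) => s)
      = 0 := by
    ext i j
    simpa [mul_apply, mulVec, dotProduct, mul_comm] using congrFun hh i
  rw [← hX, ← det_mul, fromBlocks_multiply, hB, det_fromBlocks_zero₁₂, det_unique (n := n)]
  simp [mul_apply, dotProduct]

theorem natCard_quotient_range_mulVecLin {ι : Type*} [Fintype ι] [DecidableEq ι]
    (M : Matrix ι ι ℤ) (hM : M.det ≠ 0) :
    Nat.card ((ι → ℤ) ⧸ LinearMap.range M.mulVecLin) = M.det.natAbs := by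
  have hinj : Function.Injective M.mulVecLin := by
    rw [← LinearMap.ker_eq_bot, ker_mulVecLin_eq_bot_iff]
    intro v hv
    by_contra hne
    exact hM (exists_mulVec_eq_zero_iff.mp ⟨v, hne, hv⟩)
  rw [← Submodule.natAbs_det_equiv _ (LinearEquiv.ofInjective _ hinj).toAddEquiv,
    ← LinearMap.det_toLin']
  rfl

end Matrix

theorem SimpleGraph.lapMatrix_apply {V : Type*} [Fintype V] [DecidableEq V] (G : SimpleGraph V)
    [DecidableRel G.Adj] {R : Type*} [Ring R] (x y : V) :
    G.lapMatrix R x y = if x = y then (G.degree x : R) else if G.Adj x y then -1 else 0 := by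
  by_cases h : x = y
  · subst h
    simp [lapMatrix, degMatrix]
  · by_cases hadj : G.Adj x y <;> simp [lapMatrix, degMatrix, h, hadj]

section CriticalGroup

variable {V : Type*} [Fintype V]

lemma mem_div0_iff (D : V → ℤ) : D ∈ Div0 V ↔ ∑ v, D v = 0 := Iff.rfl

variable [DecidableEq V]

def reducedLapMatrix (G : SimpleGraph V) [DecidableRel G.Adj] (v₀ : V) :
    Matrix {v // v ≠ v₀} {v // v ≠ v₀} ℤ :=
  (G.lapMatrix ℤ).submatrix (↑) (↑)

def div0EquivRestrict (v₀ : V) : Div0 V ≃+ ({v // v ≠ v₀} → ℤ) where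
  toFun D v := D.1 v
  invFun y := ⟨fun v => if h : v = v₀ then -∑ a, y a else y ⟨v, h⟩, by
    simp [mem_div0_iff, Fintype.sum_eq_add_sum_subtype_ne _ v₀, fun v : {v // v ≠ v₀} => v.2]⟩
  left_inv D := by
    obtain ⟨D, hD⟩ := D
    rw [mem_div0_iff, Fintype.sum_eq_add_sum_subtype_ne _ v₀] at hD
    ext v
    by_cases h : v = v₀
    · subst h
      simp only [dif_pos]
      linarith
    · simp [h]
  right_inv y := by
    ext v
    simp [v.2]
  map_add' _ _ := rfl

variable (G : SimpleGraph V) [DecidableRel G.Adj]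

lemma lapMatrix_mulVec_mem_div0 (x : V → ℤ) : G.lapMatrix ℤ *ᵥ x ∈ Div0 V := by
  have h := congrArg (· ⬝ᵥ x) (G.lapMatrix_mulVec_const_eq_zero (R := ℤ))
  rw [zero_dotProduct, ← (G.isSymm_lapMatrix ℤ).eq, ← vecMul_transpose, ← dotProduct_mulVec] at h
  rw [mem_div0_iff]
  simpa [dotProduct] using h

lemma restrict_lapMatrix_mulVec {v₀ : V} (x : V → ℤ) (hx : x v₀ = 0) :
    (fun v : {v // v ≠ v₀} => (G.lapMatrix ℤ *ᵥ x) v)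
      = reducedLapMatrix G v₀ *ᵥ fun v => x v := by
  ext v
  simp [mulVec, dotProduct, Fintype.sum_eq_add_sum_subtype_ne _ v₀, hx, reducedLapMatrix]

lemma mem_prin_iff_restrict_mem_range (v₀ : V) (D : Div0 V) :
    D.1 ∈ Prin G ↔ div0EquivRestrict v₀ D ∈ LinearMap.range (reducedLapMatrix G v₀).mulVecLin := by
  constructor
  · rintro ⟨x, hx⟩
    have hshift : G.lapMatrix ℤ *ᵥ (fun v => x v - x v₀) = G.lapMatrix ℤ *ᵥ x := by
      rw [show (fun v => x v - x v₀) = x - x v₀ • fun _ => 1 by ext; simp, mulVec_sub,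
        mulVec_smul, G.lapMatrix_mulVec_const_eq_zero, smul_zero, sub_zero]
    have hrestrict := restrict_lapMatrix_mulVec G (fun v => x v - x v₀) (sub_self _)
    beta_reduce at hrestrict
    refine ⟨fun v => x v - x v₀, ?_⟩
    rw [mulVecLin_apply, ← hrestrict, hshift]
    exact congrArg (fun (D : V → ℤ) (v : {v // v ≠ v₀}) => D v) hx
  · rintro ⟨z, hz⟩
    let x : V → ℤ := fun v => if h : v = v₀ then 0 else z ⟨v, h⟩
    have hxz : (fun v : {v // v ≠ v₀} => x v) = z := funext fun v => dif_neg v.2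
    have hrestrict : div0EquivRestrict v₀ ⟨_, lapMatrix_mulVec_mem_div0 G x⟩
        = div0EquivRestrict v₀ D := by
      rw [← hz, mulVecLin_apply, ← hxz]
      exact restrict_lapMatrix_mulVec G x (dif_pos rfl)
    exact ⟨x, congrArg Subtype.val ((div0EquivRestrict v₀).injective hrestrict)⟩

theorem natCard_criticalGroup (v₀ : V) (h : (reducedLapMatrix G v₀).det ≠ 0) :
    Nat.card (CriticalGroup G) = (reducedLapMatrix G v₀).det.natAbs := by
  rw [← (reducedLapMatrix G v₀).natCard_quotient_range_mulVecLin h]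
  refine Nat.card_congr (QuotientAddGroup.congr _ _ (div0EquivRestrict v₀) ?_).toEquiv
  ext y
  obtain ⟨D, rfl⟩ := (div0EquivRestrict v₀).surjective y
  rw [← SetLike.mem_coe, AddSubgroup.coe_map, AddMonoidHom.coe_coe,
    (div0EquivRestrict v₀).injective.mem_set_image, SetLike.mem_coe,
    AddSubgroup.mem_addSubgroupOf, mem_prin_iff_restrict_mem_range G v₀]
  rfl

end CriticalGroup

section PathDirichletLap

def pathDirichletLap (m : ℕ) : Matrix (Fin m) (Fin m) ℤ :=
  of fun a b => if a = b then 2 else if (a : ℕ) + 1 = b ∨ (b : ℕ) + 1 = a then -1 else 0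

lemma pathDirichletLap_mulVec (m : ℕ) (f : ℕ → ℤ) (j : Fin m) :
    (pathDirichletLap m *ᵥ fun i => f i) j
      = 2 * f j - (if (j : ℕ) + 1 < m then f (j + 1) else 0)
        - (if 0 < (j : ℕ) then f (j - 1) else 0) := by
  obtain ⟨j, hj⟩ := j
  have hterm : ∀ i : ℕ, (if j = i then 2 else if j + 1 = i ∨ i + 1 = j then -1 else 0) * f i
      = (if i = j then 2 * f j else 0) - (if i = j + 1 then f (j + 1) else 0)
        - (if 0 < j then (if i = j - 1 then f (j - 1) else 0) else 0) := by
    intro i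
    split_ifs <;> first | omega | (subst_vars; ring)
  simp only [mulVec, dotProduct, pathDirichletLap, of_apply, Fin.ext_iff]
  rw [Fin.sum_univ_eq_sum_range
      (fun i => (if j = i then 2 else if j + 1 = i ∨ i + 1 = j then -1 else 0) * f i),
    Finset.sum_congr rfl fun i _ => hterm i, Finset.sum_sub_distrib, Finset.sum_sub_distrib,
    Finset.sum_ite_eq', Finset.sum_ite_eq']
  by_cases h0 : 0 < j
  · simp [h0, hj, Finset.sum_ite_eq', show j - 1 < m by omega]
  · simp [h0, hj]

lemma pathDirichletLap_mulVec_succ (m : ℕ) :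
    pathDirichletLap m *ᵥ (fun i => ((i : ℕ) : ℤ) + 1)
      = fun j : Fin m => if (j : ℕ) + 1 = m then (m : ℤ) + 1 else 0 := by
  ext j
  rw [pathDirichletLap_mulVec m (fun i => (i : ℤ) + 1)]
  have := j.2
  split_ifs <;> omega

lemma pathDirichletLap_mulVec_rev (m : ℕ) :
    pathDirichletLap m *ᵥ (fun i => (m : ℤ) - (i : ℕ))
      = fun j : Fin m => if (j : ℕ) = 0 then (m : ℤ) + 1 else 0 := by
  ext j
  rw [pathDirichletLap_mulVec m (fun i => (m : ℤ) - i)]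
  have := j.2
  split_ifs <;> omega

lemma pathDirichletLap_succ_submatrix (m : ℕ) :
    (pathDirichletLap (m + 1)).submatrix finSumFinEquiv finSumFinEquiv
      = fromBlocks (pathDirichletLap m) (of fun i (_ : Fin 1) => if (i : ℕ) + 1 = m then -1 else 0)
          (of fun _ j => if (j : ℕ) + 1 = m then -1 else 0) (of fun _ _ => 2) := by
  ext (i | i) (j | j) <;> simp [pathDirichletLap, Fin.ext_iff] <;> omega

theorem det_pathDirichletLap (m : ℕ) : (pathDirichletLap m).det = m + 1 := by
  induction m with
  | zero => simp
  | succ m ih =>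
    have key := det_fromBlocks_unique_mul (A := pathDirichletLap m)
      (b := fun i => if (i : ℕ) + 1 = m then -1 else 0)
      (c := fun j => if (j : ℕ) + 1 = m then -1 else 0) (d := 2) (n := Fin 1)
      (fun i => ((i : ℕ) : ℤ) + 1) ((m : ℤ) + 1) (by
        rw [pathDirichletLap_mulVec_succ]
        ext j
        simp only [Pi.add_apply, Pi.smul_apply, smul_eq_mul, Pi.zero_apply]
        split_ifs <;> ring)
    rw [← pathDirichletLap_succ_submatrix, det_submatrix_equiv_self, ih] at key
    have hdot : ((fun j : Fin m => if (j : ℕ) + 1 = m then (-1 : ℤ) else 0) ⬝ᵥ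
        fun i => ((i : ℕ) : ℤ) + 1) = -m := by
      cases m with
      | zero => simp
      | succ m => simp [dotProduct, Fin.sum_univ_castSucc, (Fin.is_lt _).ne]
    rw [hdot] at key
    push_cast
    apply mul_right_cancel₀ (show (m : ℤ) + 1 ≠ 0 by positivity)
    linear_combination key

end PathDirichletLap

section HingeReducedLap

variable {n : ℕ}

def hingeReducedLap (m : Fin n → ℕ) :
    Matrix ((Σ i, Fin (m i)) ⊕ Unit) ((Σ i, Fin (m i)) ⊕ Unit) ℤ :=
  fromBlocks (blockDiagonal' fun i => pathDirichletLap (m i))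
    (of fun p _ => if (p.2 : ℕ) = 0 then -1 else 0)
    (of fun _ q => if (q.2 : ℕ) = 0 then -1 else 0)
    (of fun _ _ => (n : ℤ) + 1)

lemma blockDiagonal'_pathDirichletLap_mulVec_rev (m : Fin n → ℕ) (P : Fin n → ℤ) :
    (blockDiagonal' fun i => pathDirichletLap (m i))
        *ᵥ (fun p => ((m p.1 : ℤ) - (p.2 : ℕ)) * P p.1)
      = fun p => if (p.2 : ℕ) = 0 then ((m p.1 : ℤ) + 1) * P p.1 else 0 := by
  ext ⟨i, j⟩
  have hv : (fun j' : Fin (m i) => ((m i : ℤ) - (j' : ℕ)) * P i)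
      = P i • fun j' : Fin (m i) => (m i : ℤ) - (j' : ℕ) := by
    ext
    simp [mul_comm]
  rw [blockDiagonal'_mulVec_apply, hv, mulVec_smul, pathDirichletLap_mulVec_rev]
  simp only [Pi.smul_apply, smul_eq_mul]
  split_ifs <;> ring

theorem det_hingeReducedLap (m : Fin n → ℕ) :
    (hingeReducedLap m).det
      = ∏ i, ((m i : ℤ) + 1) + ∑ i, ∏ j ∈ Finset.univ.erase i, ((m j : ℤ) + 1) := by
  set s := ∏ i, ((m i : ℤ) + 1)
  set P : Fin n → ℤ := fun i => ∏ j ∈ Finset.univ.erase i, ((m j : ℤ) + 1)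
  have hsP : ∀ i, ((m i : ℤ) + 1) * P i = s := fun i =>
    Finset.mul_prod_erase _ (fun j => (m j : ℤ) + 1) (Finset.mem_univ i)
  -- `h` is `s` times the function that is `1` at `u`, `0` at `w` and linear along each path.
  have key := det_fromBlocks_unique_mul (n := Unit)
      (A := blockDiagonal' fun i => pathDirichletLap (m i))
      (b := fun p => if (p.2 : ℕ) = 0 then -1 else 0)
      (c := fun q => if (q.2 : ℕ) = 0 then -1 else 0) (d := (n : ℤ) + 1)
      (fun p => ((m p.1 : ℤ) - (p.2 : ℕ)) * P p.1) s (by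
        ext ⟨i, j⟩
        rw [Pi.add_apply, blockDiagonal'_pathDirichletLap_mulVec_rev, ← hsP i]
        simp only [Pi.smul_apply, smul_eq_mul, Pi.zero_apply]
        split_ifs <;> ring)
  have hdetA : (blockDiagonal' fun i => pathDirichletLap (m i)).det = s := by
    simp [det_blockDiagonal', det_pathDirichletLap, s]
  have hdot : ((fun q : Σ i, Fin (m i) => if (q.2 : ℕ) = 0 then (-1 : ℤ) else 0) ⬝ᵥ
      fun p => ((m p.1 : ℤ) - (p.2 : ℕ)) * P p.1) = -∑ i, (m i : ℤ) * P i := by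
    simp only [dotProduct, Fintype.sum_sigma, ← Finset.sum_neg_distrib]
    refine Fintype.sum_congr _ _ fun i => ?_
    rw [Fin.sum_univ_eq_sum_range (fun j => (if j = 0 then (-1 : ℤ) else 0) * ((m i - j) * P i))]
    simp only [ite_mul, zero_mul, Finset.sum_ite_eq', Finset.mem_range]
    split_ifs with h
    · ring
    · simp [show m i = 0 by omega]
  rw [hdetA, hdot] at key
  have hsum : ∑ i, (m i : ℤ) * P i + ∑ i, P i = n * s := by
    simp [← Finset.sum_add_distrib, ← add_one_mul, hsP]
  apply mul_right_cancel₀ (Finset.prod_ne_zero_iff.mpr fun i _ => by positivity : s ≠ 0)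
  rw [hingeReducedLap]
  linear_combination key - s * hsum

end HingeReducedLap

lemma Finset.sum_range_ite_adjacent (m j : ℕ) :
    ∑ y ∈ Finset.range m, (if j + 1 = y ∨ y + 1 = j then 1 else 0 : ℕ)
      = (if j + 1 < m then 1 else 0) + (if 0 < j ∧ j ≤ m then 1 else 0) := by
  induction m with
  | zero => rw [Finset.sum_range_zero]; split_ifs <;> omega
  | succ m ih => rw [Finset.sum_range_succ, ih]; split_ifs <;> omega

section GHinge

variable {n : ℕ} {k : Fin n → ℕ}

lemma gHinge_adj_inl_inl (a b : Fin 2) :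
    (GHinge n k).Adj (Sum.inl a) (Sum.inl b) ↔ a ≠ b := by
  fin_cases a <;> fin_cases b <;> simp [GHinge, gHingeRelB]

lemma gHinge_adj_inl_inr (a : Fin 2) (p : Σ i, Fin (k i - 2)) :
    (GHinge n k).Adj (Sum.inl a) (Sum.inr p)
      ↔ (a = 0 ∧ (p.2 : ℕ) = 0) ∨ (a = 1 ∧ (p.2 : ℕ) = k p.1 - 3) := by
  fin_cases a <;> simp [GHinge, gHingeRelB]

lemma gHinge_adj_inr_inl (p : Σ i, Fin (k i - 2)) (a : Fin 2) :
    (GHinge n k).Adj (Sum.inr p) (Sum.inl a)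
      ↔ (a = 0 ∧ (p.2 : ℕ) = 0) ∨ (a = 1 ∧ (p.2 : ℕ) = k p.1 - 3) := by
  rw [SimpleGraph.adj_comm, gHinge_adj_inl_inr]

lemma gHinge_adj_inr_inr (p q : Σ i, Fin (k i - 2)) :
    (GHinge n k).Adj (Sum.inr p) (Sum.inr q)
      ↔ p.1 = q.1 ∧ ((p.2 : ℕ) + 1 = q.2 ∨ (q.2 : ℕ) + 1 = p.2) := by
  obtain ⟨i, j⟩ := p
  obtain ⟨i', j'⟩ := q
  simp only [GHinge, SimpleGraph.fromRel_adj, gHingeRelB]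
  by_cases h : i = i'
  · subst h
    simp only [ne_eq, Sum.inr.injEq, Sigma.mk.injEq, heq_eq_eq, Fin.ext_iff, true_and, BEq.rfl,
      Bool.true_and, beq_iff_eq]
    omega
  · simp [h, Ne.symm h]

lemma degree_gu (hk : ∀ i, 3 ≤ k i) : (GHinge n k).degree (gu n k) = n + 1 := by
  have h := SimpleGraph.degree_eq_sum_if_adj (R := ℕ) (GHinge n k) (Sum.inl 0)
  rw [Nat.cast_id] at h
  rw [gu, h, Fintype.sum_sum_type, Fin.sum_univ_two, Fintype.sum_sigma]
  simp only [gHinge_adj_inl_inr, gHinge_adj_inl_inl, true_and, Fin.zero_eq_one_iff,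
    OfNat.ofNat_ne_one, false_and, or_false]
  simp only [fun i => Fin.sum_univ_eq_sum_range (fun y => if y = 0 then 1 else 0) (k i - 2),
    Finset.sum_ite_eq', Finset.mem_range, fun i => show 0 < k i - 2 by have := hk i; omega]
  simp [add_comm]

lemma degree_gv (i : Fin n) (j : Fin (k i - 2)) : (GHinge n k).degree (gv n k i j) = 2 := by
  have h := SimpleGraph.degree_eq_sum_if_adj (R := ℕ) (GHinge n k) (Sum.inr ⟨i, j⟩)
  rw [Nat.cast_id] at h
  rw [gv, h, Fintype.sum_sum_type, Fin.sum_univ_two, Fintype.sum_sigma, Finset.sum_eq_single i]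
  · simp only [gHinge_adj_inr_inr, true_and, gHinge_adj_inr_inl]
    rw [Fin.sum_univ_eq_sum_range (fun y => if (j : ℕ) + 1 = y ∨ y + 1 = j then 1 else 0),
      Finset.sum_range_ite_adjacent]
    have := j.2
    simp only [Fin.isValue, zero_ne_one, false_and, or_false, one_ne_zero, false_or, Fin.is_le',
      and_true]
    split_ifs <;> omega
  · intro i' _ hi'
    simp [gHinge_adj_inr_inr, Ne.symm hi']
  · simp

def hingeVertexEquiv : (Σ i, Fin (k i - 2)) ⊕ Unit ≃ {x : GHingeVertex n k // x ≠ gw n k} where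
  toFun
    | Sum.inl p => ⟨Sum.inr p, Sum.inr_ne_inl⟩
    | Sum.inr _ => ⟨gu n k, by simp [gu, gw]⟩
  invFun
    | ⟨Sum.inl _, _⟩ => Sum.inr ()
    | ⟨Sum.inr p, _⟩ => Sum.inl p
  left_inv x := by rcases x with p | _ <;> rfl
  right_inv
    | ⟨Sum.inl a, h⟩ => by
      fin_cases a
      · rfl
      · exact absurd rfl h
    | ⟨Sum.inr p, _⟩ => rfl

theorem reducedLapMatrix_gHinge (hk : ∀ i, 3 ≤ k i) :
    (reducedLapMatrix (GHinge n k) (gw n k)).submatrix hingeVertexEquiv hingeVertexEquiv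
      = hingeReducedLap (fun i => k i - 2) := by
  ext (⟨i, j⟩ | _) (⟨i', j'⟩ | _)
  · simp only [reducedLapMatrix, hingeVertexEquiv, submatrix_apply, SimpleGraph.lapMatrix_apply,
      hingeReducedLap, fromBlocks_apply₁₁]
    by_cases hi : i = i'
    · subst hi
      simp only [Equiv.coe_fn_mk, gHinge_adj_inr_inr, true_and, blockDiagonal'_apply_eq,
        pathDirichletLap, of_apply, Fin.ext_iff, Sum.inr.injEq, Sigma.mk.injEq, heq_eq_eq]
      rw [show (GHinge n k).degree (Sum.inr ⟨i, j⟩) = 2 from degree_gv i j]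
      rfl
    · simp [hi, gHinge_adj_inr_inr, blockDiagonal'_apply_ne _ _ _ hi]
  · simp [reducedLapMatrix, hingeVertexEquiv, SimpleGraph.lapMatrix_apply, hingeReducedLap, gu,
      gHinge_adj_inr_inl]
  · simp [reducedLapMatrix, hingeVertexEquiv, SimpleGraph.lapMatrix_apply, hingeReducedLap, gu,
      gHinge_adj_inl_inr]
  · simp only [reducedLapMatrix, hingeVertexEquiv, submatrix_apply, SimpleGraph.lapMatrix_apply,
      hingeReducedLap, fromBlocks_apply₂₂, Equiv.coe_fn_mk, if_pos, degree_gu hk, of_apply]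
    push_cast
    rfl

end GHinge

theorem gHinge_criticalGroup_card_general (n : ℕ) (k : Fin n → ℕ) (hk : ∀ i, 3 ≤ k i) :
    Finite (CriticalGroup (GHinge n k)) ∧
      Nat.card (CriticalGroup (GHinge n k)) =
        (∏ i, (k i - 1)) + ∑ i, ∏ j ∈ Finset.univ.erase i, (k j - 1) := by
  have hk1 : ∀ i, ((k i - 2 : ℕ) : ℤ) + 1 = ((k i - 1 : ℕ) : ℤ) := fun i => by
    have := hk i
    omega
  have hdet : (reducedLapMatrix (GHinge n k) (gw n k)).det
      = ((∏ i, (k i - 1) + ∑ i, ∏ j ∈ Finset.univ.erase i, (k j - 1) : ℕ) : ℤ) := by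
    rw [← det_submatrix_equiv_self hingeVertexEquiv, reducedLapMatrix_gHinge hk,
      det_hingeReducedLap]
    push_cast [hk1]
    rfl
  have hpos : 0 < ∏ i, (k i - 1) + ∑ i, ∏ j ∈ Finset.univ.erase i, (k j - 1) :=
    Nat.add_pos_left (Finset.prod_pos fun i _ => by have := hk i; omega) _
  have hcard := natCard_criticalGroup (GHinge n k) (gw n k) (by rw [hdet]; exact_mod_cast hpos.ne')
  rw [hdet, Int.natAbs_natCast] at hcard
  exact ⟨Nat.finite_of_card_ne_zero (hcard ▸ hpos.ne'), hcard⟩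

/-- For `n ≥ 2` and `k₁, …, kₙ ≥ 3`, the critical group of the hinge graph
`H_{k₁-1,…,kₙ-1}` is a finite group of cardinality `∏ i (k_i-1) + ∑ i ∏_{j ≠ i} (k_j-1)`. -/
theorem gHinge_criticalGroup_card (n : ℕ) (hn : 2 ≤ n) (k : Fin n → ℕ) (hk : ∀ i, 3 ≤ k i) :
    Finite (CriticalGroup (GHinge n k)) ∧
      Nat.card (CriticalGroup (GHinge n k)) =
        (∏ i, (k i - 1)) + ∑ i, ∏ j ∈ Finset.univ.erase i, (k j - 1) :=
  gHinge_criticalGroup_card_general n k hk
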